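/- Let m ≥ 3 and let Υ(m−1) be the GreedySwaps list for m−1 variables (Υ(2) = [1]; Υ(k) = Υ(k−1) ++ [k−1, …, 1] ++ [i+1 : i ∈ Υ(k−1)]). Define two sequences of permutations of {1, …, m}: sequence A starts at the identity permutation and applies the adjacent transpositions at the positions listed in Υ(m−1) in order; sequence B starts at the permutation σ_0 with σ_0(1) = m and σ_0(k+1) = k for 1 ≤ k ≤ m−1, and applies the adjacent transpositions at the positions listed in [i+1 : i ∈ Υ(m−1)] in order. Then every subset S ⊆ {1, …, m} with 1 ≤ |S| ≤ m−1 occurs as the prefix set of size |S| of some permutation appearing in sequence A or in sequence B. -/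

import Mathlib

/-- The prefix set of size `k` of a permutation `σ` of `{1, …, m}` (represented
0-indexed as `Equiv.Perm (Fin m)`): the set `{σ(1), …, σ(k)}`. -/
def prefixSet {m : ℕ} (σ : Equiv.Perm (Fin m)) (k : ℕ) : Finset (Fin m) :=
  (Finset.univ.filter fun i : Fin m => (i : ℕ) < k).image σ

/-- The adjacent transposition at (1-indexed) position `j` of an ordering of
`m` variables: it swaps positions `j` and `j+1` (0-indexed `j−1` and `j`). -/
def adjSwap (m j : ℕ) : Equiv.Perm (Fin m) :=
  if h : 1 ≤ j ∧ j + 1 ≤ m then Equiv.swap ⟨j - 1, by omega⟩ ⟨j, by omega⟩ else 1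

/-- `σ'` is obtained from `σ` by an adjacent transposition at some position. -/
def IsAdjSwapStep {m : ℕ} (σ σ' : Equiv.Perm (Fin m)) : Prop :=
  ∃ j : ℕ, 1 ≤ j ∧ j + 1 ≤ m ∧ σ' = σ * adjSwap m j


/-!
Call a swap list `L` covering for `k` (`CoversSubsets m k L`) if, running its swaps from any
ordering `ρ`, every set of variables that `ρ` places among its first `k` positions shows up as a
prefix set. The countdown swaps `[k-1, …, 1]` multiply to the rotation bringing position `k-1` to
the front, and conjugation by this rotation shifts every swap position up by one. So running
`L ++ [k-1, …, 1] ++ (L + 1)` from `ρ` means: run `L`, then run `L` again from `ρ * L` while the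
variable `v` at position `k-1` is kept in front. If `L` is covering for `k-1`, sets avoiding `v`
are found in the first phase and sets containing `v` in the third one (apply the hypothesis to
the set without `v`). Hence `Υ(k)` is covering for `k`, and the two processors run the first and
the third phase of this argument for `Υ(m)` from the identity.
-/

open Equiv Finset MulAction

def prodSwaps (m : ℕ) (L : List ℕ) : Perm (Fin m) := (L.map (adjSwap m)).prod

@[simp] lemma prodSwaps_nil (m : ℕ) : prodSwaps m [] = 1 := rfl

@[simp] lemma prodSwaps_cons (m a : ℕ) (L : List ℕ) :
    prodSwaps m (a :: L) = adjSwap m a * prodSwaps m L := by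
  simp [prodSwaps]

@[simp] lemma prodSwaps_append (m : ℕ) (L₁ L₂ : List ℕ) :
    prodSwaps m (L₁ ++ L₂) = prodSwaps m L₁ * prodSwaps m L₂ := by
  simp [prodSwaps]

lemma adjSwap_eq_swap {m j : ℕ} (hj : 1 ≤ j) (hjm : j + 1 ≤ m) :
    adjSwap m j = swap ⟨j - 1, by omega⟩ ⟨j, by omega⟩ :=
  dif_pos ⟨hj, hjm⟩

lemma adjSwap_mem_fixingSubgroup {m j k : ℕ} (hjk : j < k) :
    adjSwap m j ∈ fixingSubgroup (Perm (Fin m)) {i : Fin m | k ≤ (i : ℕ)} := by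
  refine (mem_fixingSubgroup_iff _).2 fun i (hi : k ≤ (i : ℕ)) => ?_
  unfold adjSwap
  split_ifs
  · exact swap_apply_of_ne_of_ne (Fin.ne_of_val_ne (by simp; omega))
      (Fin.ne_of_val_ne (by simp; omega))
  · rfl

lemma prodSwaps_mem_fixingSubgroup {m k : ℕ} {L : List ℕ} (hL : ∀ j ∈ L, j < k) :
    prodSwaps m L ∈ fixingSubgroup (Perm (Fin m)) {i : Fin m | k ≤ (i : ℕ)} :=
  Subgroup.list_prod_mem _ <| List.forall_mem_map.2 fun j hj => adjSwap_mem_fixingSubgroup (hL j hj)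

lemma apply_eq_self_of_mem_fixingSubgroup {m k : ℕ} {w : Perm (Fin m)}
    (hw : w ∈ fixingSubgroup (Perm (Fin m)) {i : Fin m | k ≤ (i : ℕ)}) {i : Fin m}
    (hi : k ≤ (i : ℕ)) : w i = i :=
  (mem_fixingSubgroup_iff _).1 hw i hi

lemma mem_prefixSet {m : ℕ} {σ : Perm (Fin m)} {k : ℕ} {x : Fin m} :
    x ∈ prefixSet σ k ↔ ((σ⁻¹ x : Fin m) : ℕ) < k := by
  simp only [prefixSet, mem_image, mem_filter, mem_univ, true_and]
  exact ⟨by rintro ⟨i, hi, rfl⟩; simpa using hi, fun h => ⟨σ⁻¹ x, h, by simp⟩⟩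

lemma card_prefixSet {m k : ℕ} (hkm : k ≤ m) (σ : Perm (Fin m)) :
    (prefixSet σ k).card = k := by
  rw [prefixSet, card_image_of_injective _ σ.injective, Fin.card_filter_val_lt]
  omega

@[simp] lemma prefixSet_zero {m : ℕ} (σ : Perm (Fin m)) : prefixSet σ 0 = ∅ := by
  simp [prefixSet]

lemma prefixSet_succ {m k : ℕ} (σ : Perm (Fin m)) (hk : k < m) :
    prefixSet σ (k + 1) = insert (σ ⟨k, hk⟩) (prefixSet σ k) := by
  ext x
  simp only [mem_insert, mem_prefixSet, ← Perm.inv_eq_iff_eq, Fin.ext_iff]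
  omega

lemma prefixSet_mul_of_mem_fixingSubgroup {m k : ℕ} (σ : Perm (Fin m)) {w : Perm (Fin m)}
    (hw : w ∈ fixingSubgroup (Perm (Fin m)) {i : Fin m | k ≤ (i : ℕ)}) :
    prefixSet (σ * w) k = prefixSet σ k := by
  ext x
  simp only [mem_prefixSet, mul_inv_rev, Perm.mul_apply]
  by_cases hx : k ≤ ((σ⁻¹ x : Fin m) : ℕ)
  · rw [apply_eq_self_of_mem_fixingSubgroup (inv_mem hw) hx]
  · refine iff_of_true ?_ (by omega)
    by_contra! h
    have := apply_eq_self_of_mem_fixingSubgroup hw h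
    rw [← Perm.mul_apply, mul_inv_cancel, Perm.one_apply] at this
    rw [← this] at h
    omega

lemma val_cycleRange {m : ℕ} (i j : Fin m) :
    (Fin.cycleRange i j : ℕ) =
      if (j : ℕ) < i then (j : ℕ) + 1 else if (j : ℕ) = i then 0 else (j : ℕ) := by
  rcases lt_trichotomy j i with h | rfl | h
  · rw [Fin.coe_cycleRange_of_lt h, if_pos (Fin.lt_def.1 h)]
  · rw [Fin.coe_cycleRange_of_le le_rfl]
    simp
  · rw [Fin.cycleRange_of_gt h, if_neg (by omega), if_neg (by omega)]

def countdown (k : ℕ) : List ℕ := (List.range (k - 1)).map (fun j => k - 1 - j)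

lemma countdown_succ_succ (n : ℕ) : countdown (n + 2) = (n + 1) :: countdown (n + 1) := by
  rw [countdown, countdown, show n + 2 - 1 = n + 1 from rfl, List.range_succ_eq_map,
    List.map_cons, List.map_map]
  congr 1
  exact List.map_congr_left fun j _ => by simp only [Function.comp_apply]; omega

lemma cycleRange_succ {m n : ℕ} (hn : n + 1 < m) :
    Fin.cycleRange (⟨n + 1, hn⟩ : Fin m)
      = Fin.cycleRange ⟨n, by omega⟩ * swap ⟨n, by omega⟩ ⟨n + 1, hn⟩ := by
  ext x
  simp only [Perm.mul_apply, val_cycleRange, swap_apply_def, Fin.ext_iff]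
  split_ifs <;> simp_all <;> omega

lemma prodSwaps_countdown {m n : ℕ} (hn : n < m) :
    prodSwaps m (countdown (n + 1)) = (Fin.cycleRange ⟨n, hn⟩)⁻¹ := by
  induction n with
  | zero => simp [countdown, Fin.cycleRange_mk_zero]
  | succ n ih =>
    rw [countdown_succ_succ, prodSwaps_cons, ih, cycleRange_succ hn, mul_inv_rev, swap_inv,
      adjSwap_eq_swap (by omega) hn]
    rfl

lemma cycleRange_mul_adjSwap_mul_inv {m n j : ℕ} (hn : n < m) (hj : 1 ≤ j) (hjn : j < n) :
    Fin.cycleRange ⟨n, hn⟩ * adjSwap m j * (Fin.cycleRange ⟨n, hn⟩)⁻¹ = adjSwap m (j + 1) := by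
  rw [adjSwap_eq_swap hj (by omega), adjSwap_eq_swap (by omega) (by omega), ← swap_apply_apply]
  congr 1 <;> ext <;> simp only [val_cycleRange] <;> split_ifs <;> omega

lemma prodSwaps_map_succ {m n : ℕ} (hn : n < m) {L : List ℕ} (hL : ∀ j ∈ L, 1 ≤ j ∧ j < n) :
    prodSwaps m (L.map (· + 1))
      = Fin.cycleRange ⟨n, hn⟩ * prodSwaps m L * (Fin.cycleRange ⟨n, hn⟩)⁻¹ := by
  rw [← MulAut.conj_apply, prodSwaps, prodSwaps, map_list_prod, List.map_map, List.map_map]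
  congr 1
  refine List.map_congr_left fun j hj => ?_
  simp only [Function.comp_apply, MulAut.conj_apply]
  exact (cycleRange_mul_adjSwap_mul_inv hn (hL j hj).1 (hL j hj).2).symm

lemma prefixSet_mul_cycleRange_inv {m n j : ℕ} (hn : n < m) (σ : Perm (Fin m)) (hj : j ≤ n) :
    prefixSet (σ * (Fin.cycleRange ⟨n, hn⟩)⁻¹) (j + 1) = insert (σ ⟨n, hn⟩) (prefixSet σ j) := by
  ext x
  simp only [mem_insert, mem_prefixSet, mul_inv_rev, inv_inv, Perm.mul_apply,
    ← Perm.inv_eq_iff_eq, Fin.ext_iff, val_cycleRange]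
  split_ifs <;> omega

def CoversSubsets (m k : ℕ) (L : List ℕ) : Prop :=
  ∀ (ρ : Perm (Fin m)) (S : Finset (Fin m)), S ⊆ prefixSet ρ k →
    ∃ t ≤ L.length, prefixSet (ρ * prodSwaps m (L.take t)) #S = S

lemma coversSubsets_zero_nil (m : ℕ) : CoversSubsets m 0 [] := fun ρ S hS =>
  ⟨0, le_rfl, by simp [subset_empty.1 (by simpa using hS)]⟩

lemma CoversSubsets.exists_prefixSet_mul_cycleRange_inv {m n : ℕ} {L : List ℕ}
    (hL : CoversSubsets m n L) (hLn : ∀ j ∈ L, j < n) (hn : n < m) (ρ : Perm (Fin m))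
    {S : Finset (Fin m)} (hS : S ⊆ prefixSet ρ (n + 1)) (hmem : ρ ⟨n, hn⟩ ∈ S) :
    ∃ t ≤ L.length,
      prefixSet (ρ * prodSwaps m (L.take t) * (Fin.cycleRange ⟨n, hn⟩)⁻¹) #S = S := by
  have hS' : S.erase (ρ ⟨n, hn⟩) ⊆ prefixSet ρ n := by
    rwa [← subset_insert_iff, ← prefixSet_succ]
  obtain ⟨t, ht, hprefix⟩ := hL ρ _ hS'
  have hcard : #(S.erase (ρ ⟨n, hn⟩)) ≤ n := by
    simpa [card_prefixSet hn.le] using card_le_card hS'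
  have hfix : (ρ * prodSwaps m (L.take t)) ⟨n, hn⟩ = ρ ⟨n, hn⟩ := by
    rw [Perm.mul_apply, apply_eq_self_of_mem_fixingSubgroup
      (prodSwaps_mem_fixingSubgroup fun j hj => hLn j (List.mem_of_mem_take hj)) le_rfl]
  refine ⟨t, ht, ?_⟩
  rw [← card_erase_add_one hmem, prefixSet_mul_cycleRange_inv hn _ hcard, hfix, hprefix,
    insert_erase hmem]

def greedyStep (k : ℕ) (L : List ℕ) : List ℕ := L ++ countdown k ++ L.map (· + 1)

lemma bounds_of_mem_greedyStep {n j : ℕ} {L : List ℕ} (hL : ∀ j ∈ L, 1 ≤ j ∧ j < n)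
    (hj : j ∈ greedyStep (n + 1) L) : 1 ≤ j ∧ j < n + 1 := by
  simp only [greedyStep, countdown, List.mem_append, List.mem_map, List.mem_range] at hj
  rcases hj with (hj | ⟨i, hi, rfl⟩) | ⟨i, hi, rfl⟩
  · have := hL j hj; omega
  · omega
  · have := hL i hi; omega

lemma prodSwaps_take_greedyStep {m n : ℕ} (hn : n < m) {L : List ℕ}
    (hL : ∀ j ∈ L, 1 ≤ j ∧ j < n) (t : ℕ) :
    prodSwaps m ((greedyStep (n + 1) L).take (L.length + n + t))
      = prodSwaps m L * prodSwaps m (L.take t) * (Fin.cycleRange ⟨n, hn⟩)⁻¹ := by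
  have hlen : (countdown (n + 1)).length = n := by simp [countdown]
  rw [greedyStep, List.append_assoc, show L.length + n + t = L.length + (n + t) by omega,
    List.take_length_add_append, List.take_append, List.take_of_length_le (by omega), hlen,
    Nat.add_sub_cancel_left, prodSwaps_append, prodSwaps_append, ← List.map_take,
    prodSwaps_map_succ hn fun j hj => hL j (List.mem_of_mem_take hj), prodSwaps_countdown hn]
  group

lemma CoversSubsets.greedyStep_succ {m n : ℕ} {L : List ℕ} (hL : CoversSubsets m n L)
    (hLn : ∀ j ∈ L, 1 ≤ j ∧ j < n) (hn : n < m) :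
    CoversSubsets m (n + 1) (greedyStep (n + 1) L) := by
  have hlen : (greedyStep (n + 1) L).length = L.length + n + L.length := by
    simp [greedyStep, countdown]
    omega
  intro ρ S hS
  by_cases hmem : ρ ⟨n, hn⟩ ∈ S
  · have hS' : S ⊆ prefixSet (ρ * prodSwaps m L) (n + 1) := by
      rwa [prefixSet_mul_of_mem_fixingSubgroup _
        (prodSwaps_mem_fixingSubgroup fun j hj => (hLn j hj).2.trans (Nat.lt_succ_self n))]
    have hmem' : (ρ * prodSwaps m L) ⟨n, hn⟩ ∈ S := by
      rwa [Perm.mul_apply, apply_eq_self_of_mem_fixingSubgroup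
        (prodSwaps_mem_fixingSubgroup fun j hj => (hLn j hj).2) le_rfl]
    obtain ⟨t, ht, hprefix⟩ := hL.exists_prefixSet_mul_cycleRange_inv
      (fun j hj => (hLn j hj).2) hn _ hS' hmem'
    refine ⟨L.length + n + t, by omega, ?_⟩
    rwa [prodSwaps_take_greedyStep hn hLn t, ← mul_assoc, ← mul_assoc]
  · have hS' : S ⊆ prefixSet ρ n := by
      rwa [prefixSet_succ _ hn, subset_insert_iff, erase_eq_of_notMem hmem] at hS
    obtain ⟨t, ht, hprefix⟩ := hL ρ S hS'
    refine ⟨t, by omega, ?_⟩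
    rwa [greedyStep, List.append_assoc, List.take_append_of_le_length ht]

lemma greedySwaps_bounds_and_coversSubsets {m : ℕ} (Υ : ℕ → List ℕ) (hbase : Υ 2 = [1])
    (hrec : ∀ k, 3 ≤ k → Υ k = greedyStep k (Υ (k - 1))) :
    ∀ k, 2 ≤ k → k ≤ m → (∀ j ∈ Υ k, 1 ≤ j ∧ j < k) ∧ CoversSubsets m k (Υ k) := by
  refine Nat.le_induction (fun hm => ⟨by simp [hbase], ?_⟩) fun k hk ih hkm => ?_
  · have hcover := ((coversSubsets_zero_nil m).greedyStep_succ (by simp) (by omega)).greedyStep_succ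
      (by simp [greedyStep, countdown]) (by omega)
    rwa [hbase]
  · obtain ⟨hbound, hcover⟩ := ih (by omega)
    rw [hrec (k + 1) (by omega), Nat.add_sub_cancel]
    exact ⟨fun j hj => bounds_of_mem_greedyStep hbound hj, hcover.greedyStep_succ hbound (by omega)⟩

lemma eq_mul_prodSwaps_take {m : ℕ} {π : ℕ → Perm (Fin m)} {L : List ℕ}
    (hstep : ∀ t < L.length, π (t + 1) = π t * adjSwap m (L.getD t 0)) :
    ∀ t ≤ L.length, π t = π 0 * prodSwaps m (L.take t) := by
  intro t
  induction t with
  | zero => simp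
  | succ t ih =>
    intro (ht : t < L.length)
    rw [hstep t ht, ih ht.le, List.getD_eq_getElem _ _ ht, List.take_succ_eq_append_getElem ht,
      prodSwaps_append, prodSwaps_cons, prodSwaps_nil, mul_one, mul_assoc]

lemma eq_cycleRange_inv {m : ℕ} (hm : 0 < m) {σ : Perm (Fin m)}
    (hσ : ∀ x : Fin m, (σ x : ℕ) = if (x : ℕ) = 0 then m - 1 else (x : ℕ) - 1) :
    σ = (Fin.cycleRange ⟨m - 1, by omega⟩)⁻¹ :=
  eq_inv_of_mul_eq_one_right <| Perm.ext fun x => Fin.ext <| by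
    have := x.isLt
    rw [Perm.one_apply, Perm.mul_apply, val_cycleRange, hσ]
    dsimp only
    split_ifs <;> omega

lemma eq_prodSwaps_take_mul_cycleRange_inv {m n : ℕ} (hn : n < m) {π : ℕ → Perm (Fin m)}
    {L : List ℕ} (hL : ∀ j ∈ L, 1 ≤ j ∧ j < n) (h0 : π 0 = (Fin.cycleRange ⟨n, hn⟩)⁻¹)
    (hstep : ∀ t < L.length, π (t + 1) = π t * adjSwap m (L.getD t 0 + 1)) :
    ∀ t ≤ L.length, π t = prodSwaps m (L.take t) * (Fin.cycleRange ⟨n, hn⟩)⁻¹ := by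
  have hstep' : ∀ t < (L.map (· + 1)).length,
      π (t + 1) = π t * adjSwap m ((L.map (· + 1)).getD t 0) := fun t ht => by
    rw [List.length_map] at ht
    rw [hstep t ht, List.getD_eq_getElem _ _ ht, List.getD_eq_getElem _ _ (by simpa),
      List.getElem_map]
  intro t ht
  rw [eq_mul_prodSwaps_take hstep' t (by simpa), h0, ← List.map_take,
    prodSwaps_map_succ hn fun j hj => hL j (List.mem_of_mem_take hj), mul_assoc,
    inv_mul_cancel_left]

/-- Let m ≥ 3 and Υ(m−1) be the GreedySwaps list for m−1 variables.
Sequence A starts at the identity permutation of {1, …, m} and applies the adjacent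
transpositions at the positions listed in Υ(m−1); sequence B starts at the
permutation σ₀ with σ₀(1) = m and σ₀(k+1) = k for 1 ≤ k ≤ m−1 (0-indexed:
σ₀(0) = m−1 and σ₀(k) = k−1 for k ≥ 1) and applies the adjacent transpositions at
the positions [i+1 : i ∈ Υ(m−1)].  Then every subset S ⊆ {1, …, m} with
1 ≤ |S| ≤ m−1 occurs as the prefix set of size |S| of some permutation in
sequence A or sequence B. -/
theorem two_processor_scheme_correct (m : ℕ) (hm : 3 ≤ m)
    (Υ : ℕ → List ℕ)
    (hbase : Υ 2 = [1])
    (hrec : ∀ k, 3 ≤ k →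
      Υ k = Υ (k - 1) ++ (List.range (k - 1)).map (fun j => k - 1 - j)
              ++ (Υ (k - 1)).map (· + 1))
    (πA πB : ℕ → Equiv.Perm (Fin m))
    (hA0 : πA 0 = 1)
    (hAstep : ∀ t, t < (Υ (m - 1)).length →
      πA (t + 1) = πA t * adjSwap m ((Υ (m - 1)).getD t 0))
    (hB0 : ∀ x : Fin m,
      ((πB 0) x : ℕ) = if (x : ℕ) = 0 then m - 1 else (x : ℕ) - 1)
    (hBstep : ∀ t, t < (Υ (m - 1)).length →
      πB (t + 1) = πB t * adjSwap m ((Υ (m - 1)).getD t 0 + 1)) :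
    ∀ S : Finset (Fin m), 1 ≤ S.card → S.card ≤ m - 1 →
      (∃ t ≤ (Υ (m - 1)).length, prefixSet (πA t) S.card = S) ∨
      (∃ t ≤ (Υ (m - 1)).length, prefixSet (πB t) S.card = S) := by
  intro S _ _
  have hn : m - 1 < m := by omega
  obtain ⟨hbound, hcover⟩ :=
    greedySwaps_bounds_and_coversSubsets Υ hbase hrec (m - 1) (by omega) hn.le
  have hA := eq_mul_prodSwaps_take hAstep
  have hB := eq_prodSwaps_take_mul_cycleRange_inv hn hbound (eq_cycleRange_inv (by omega) hB0)
    hBstep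
  by_cases hmem : (⟨m - 1, hn⟩ : Fin m) ∈ S
  · right
    obtain ⟨t, ht, h⟩ := hcover.exists_prefixSet_mul_cycleRange_inv (fun j hj => (hbound j hj).2)
      hn 1 (fun x _ => mem_prefixSet.2 (by simp; omega)) hmem
    exact ⟨t, ht, by rwa [hB t ht, ← one_mul (prodSwaps m _)]⟩
  · left
    obtain ⟨t, ht, h⟩ := hcover 1 S fun x hx => mem_prefixSet.2 <| by
      have hx' : x ≠ ⟨m - 1, hn⟩ := ne_of_mem_of_not_mem hx hmem
      simp only [ne_eq, Fin.ext_iff] at hx'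
      simp only [inv_one, Perm.one_apply]
      omega
    exact ⟨t, ht, by rwa [hA t ht, hA0, one_mul]⟩
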